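/- Let N be a positive integer. Suppose we are given a commutative diagram of abelian groups with exact rows 0 → T → A → B → 0 and 0 → T' → A' → B' → 0, with vertical homomorphisms T → T', A → A', B → B'. If the induced map on N-torsion subgroups B[N] → B'[N] is surjective, and the induced maps T/NT → T'/NT' and B/NB → B'/NB' are isomorphisms, then the induced map A/NA → A'/NA' is an isomorphism. -/

import Mathlib

/-- The quotient of an abelian group by the subgroup of `N`-th multiples. -/
abbrev ModNQuot (N : ℕ) (A : Type*) [AddCommGroup A] : Type _ :=
  A ⧸ (zsmulAddGroupHom (N : ℤ) : A →+ A).range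

/-- The map `A/NA → B/NB` induced by a homomorphism `f : A →+ B`. -/
noncomputable def mapModN (N : ℕ) {A B : Type*} [AddCommGroup A] [AddCommGroup B]
    (f : A →+ B) : ModNQuot N A →+ ModNQuot N B :=
  QuotientAddGroup.map _ _ f (by
    rintro x ⟨a, rfl⟩
    exact ⟨f a, (map_zsmul f _ _).symm⟩)

/-!
Reducing mod `N` turns `0 → T → A → B → 0` into the exact sequence
`B[N] → T/NT → A/NA → B/NB → 0`, whose first map is the connecting map `b ↦ [t]` with
`fT t = N a` and `gA a = b`. Its image is the kernel of `T/NT → A/NA`, and surjectivity of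
`B[N] → B'[N]` says exactly that `T/NT → T'/NT'` maps this kernel onto the corresponding kernel
for the primed row. The five lemma applied to
`ker (T/NT → A/NA) → T/NT → A/NA → B/NB → 0` and its primed analogue finishes the proof.
-/

open Function

section ModN

variable {N : ℕ} {T A B : Type*} [AddCommGroup T] [AddCommGroup A] [AddCommGroup B]

theorem ModNQuot.mk_eq_zero_iff {a : A} :
    (QuotientAddGroup.mk a : ModNQuot N A) = 0 ↔ ∃ x : A, N • x = a := by
  simp [QuotientAddGroup.eq_zero_iff, natCast_zsmul]

theorem mapModN_mk (f : A →+ B) (a : A) :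
    mapModN N f (QuotientAddGroup.mk a) = QuotientAddGroup.mk (f a) := rfl

theorem mapModN_comp (f : T →+ A) (g : A →+ B) :
    mapModN N (g.comp f) = (mapModN N g).comp (mapModN N f) := by
  ext
  rfl

theorem mapModN_surjective {g : A →+ B} (hg : Surjective g) : Surjective (mapModN N g) :=
  QuotientAddGroup.map_surjective_of_surjective _ _ _
    (QuotientAddGroup.mk_surjective.comp hg) _

theorem exact_mapModN {f : T →+ A} {g : A →+ B} (hfg : Exact f g) (hg : Surjective g) :
    Exact (mapModN N f) (mapModN N g) := by
  intro x
  induction x using QuotientAddGroup.induction_on with | H a => ?_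
  rw [mapModN_mk]
  constructor
  · rw [ModNQuot.mk_eq_zero_iff]
    rintro ⟨b, hb⟩
    obtain ⟨c, rfl⟩ := hg b
    obtain ⟨t, ht⟩ := (hfg (a - N • c)).mp (by rw [map_sub, map_nsmul, hb, sub_self])
    refine ⟨QuotientAddGroup.mk t, ?_⟩
    rw [mapModN_mk, QuotientAddGroup.eq_iff_sub_mem, ht, sub_sub_cancel_left, ← neg_nsmul]
    exact ⟨-c, natCast_zsmul _ _⟩
  · rintro ⟨y, hy⟩
    induction y using QuotientAddGroup.induction_on with | H t => ?_
    rw [← mapModN_mk, ← hy, mapModN_mk, mapModN_mk, hfg.apply_apply_eq_zero]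
    rfl

end ModN

section Ladder

variable {N : ℕ} {T A B T' A' B' : Type*}
  [AddCommGroup T] [AddCommGroup A] [AddCommGroup B]
  [AddCommGroup T'] [AddCommGroup A'] [AddCommGroup B']
  {fT : T →+ A} {gA : A →+ B} {fT' : T' →+ A'} {gA' : A' →+ B'}
  {u : T →+ T'} {v : A →+ A'} {w : B →+ B'}

theorem map_ker_mapModN_le (hc1 : v.comp fT = fT'.comp u) :
    (mapModN N fT).ker.map (mapModN N u) ≤ (mapModN N fT').ker := by
  rintro _ ⟨x, hx, rfl⟩
  rw [AddMonoidHom.mem_ker, ← AddMonoidHom.comp_apply, ← mapModN_comp, ← hc1, mapModN_comp,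
    AddMonoidHom.comp_apply, hx, map_zero]

theorem ker_mapModN_le_map_ker (hgA : Surjective gA) (hex : Exact fT gA)
    (hfT' : Injective fT') (hex' : Exact fT' gA')
    (hc1 : ∀ t, v (fT t) = fT' (u t)) (hc2 : ∀ a, w (gA a) = gA' (v a))
    (htors : ∀ b' : B', N • b' = 0 → ∃ b : B, N • b = 0 ∧ w b = b') :
    (mapModN N fT').ker ≤ (mapModN N fT).ker.map (mapModN N u) := by
  intro y hy
  induction y using QuotientAddGroup.induction_on with | H t' => ?_
  rw [AddMonoidHom.mem_ker, mapModN_mk, ModNQuot.mk_eq_zero_iff] at hy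
  obtain ⟨a', ha'⟩ := hy
  obtain ⟨b, hbN, hb⟩ := htors (gA' a') (by rw [← map_nsmul, ha', hex'.apply_apply_eq_zero])
  obtain ⟨a, rfl⟩ := hgA b
  obtain ⟨t, ht⟩ := (hex (N • a)).mp (by rw [map_nsmul, hbN])
  obtain ⟨s, hs⟩ := (hex' (v a - a')).mp (by rw [map_sub, ← hc2, hb, sub_self])
  have hut : u t = t' + N • s := hfT' <| calc
    fT' (u t) = v (fT t) := (hc1 t).symm
    _ = N • (a' + fT' s) := by rw [ht, map_nsmul, hs, add_sub_cancel]
    _ = fT' (t' + N • s) := by rw [smul_add, ha', map_add, map_nsmul]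
  refine ⟨QuotientAddGroup.mk t, ?_, ?_⟩
  · rw [SetLike.mem_coe, AddMonoidHom.mem_ker, mapModN_mk, ht]
    exact ModNQuot.mk_eq_zero_iff.mpr ⟨a, rfl⟩
  · rw [mapModN_mk, hut, QuotientAddGroup.mk_add, ModNQuot.mk_eq_zero_iff.mpr ⟨s, rfl⟩,
      add_zero]

end Ladder

theorem stmt0_general (N : ℕ)
    {T A B T' A' B' : Type*}
    [AddCommGroup T] [AddCommGroup A] [AddCommGroup B]
    [AddCommGroup T'] [AddCommGroup A'] [AddCommGroup B']
    (fT : T →+ A) (gA : A →+ B) (fT' : T' →+ A') (gA' : A' →+ B')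
    (u : T →+ T') (v : A →+ A') (w : B →+ B')
    (hgA : Function.Surjective gA)
    (hex : fT.range = gA.ker)
    (hfT' : Function.Injective fT') (hgA' : Function.Surjective gA')
    (hex' : fT'.range = gA'.ker)
    (hc1 : v.comp fT = fT'.comp u) (hc2 : w.comp gA = gA'.comp v)
    (htors : ∀ b' : B', N • b' = 0 → ∃ b : B, N • b = 0 ∧ w b = b')
    (hu : Function.Bijective (mapModN N u))
    (hw : Function.Bijective (mapModN N w)) :
    Function.Bijective (mapModN N v) := by
  have hexact : Exact fT gA := AddMonoidHom.exact_iff.mpr hex.symm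
  have hexact' : Exact fT' gA' := AddMonoidHom.exact_iff.mpr hex'.symm
  have hker : (mapModN N fT).ker.map (mapModN N u) = (mapModN N fT').ker :=
    le_antisymm (map_ker_mapModN_le hc1)
      (ker_mapModN_le_map_ker hgA hexact hfT' hexact' (DFunLike.congr_fun hc1)
        (DFunLike.congr_fun hc2) htors)
  exact AddMonoidHom.bijective_of_surjective_of_bijective_of_bijective_of_injective
    (mapModN N fT).ker.subtype (mapModN N fT) (mapModN N gA) (0 : _ →+ Unit)
    ((mapModN N fT).ker.map (mapModN N u)).subtype (mapModN N fT') (mapModN N gA')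
    (0 : _ →+ Unit)
    ((mapModN N u).addSubgroupMap _) (mapModN N u) (mapModN N v) (mapModN N w) 0
    rfl (by rw [← mapModN_comp, ← mapModN_comp, hc1])
    (by rw [← mapModN_comp, ← mapModN_comp, hc2]) rfl
    (AddMonoidHom.exact_iff.mpr (AddSubgroup.range_subtype _).symm) (exact_mapModN hexact hgA)
    (fun y => iff_of_true rfl (mapModN_surjective hgA y))
    (AddMonoidHom.exact_iff.mpr (by rw [AddSubgroup.range_subtype, hker]))
    (exact_mapModN hexact' hgA') (fun y => iff_of_true rfl (mapModN_surjective hgA' y))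
    ((mapModN N u).addSubgroupMap_surjective _) hu hw (injective_of_subsingleton _)

/-- The `N`-torsion five-lemma core of the reduction-mod-`N` lemma. -/
theorem stmt0 (N : ℕ) (hN : 0 < N)
    {T A B T' A' B' : Type*}
    [AddCommGroup T] [AddCommGroup A] [AddCommGroup B]
    [AddCommGroup T'] [AddCommGroup A'] [AddCommGroup B']
    (fT : T →+ A) (gA : A →+ B) (fT' : T' →+ A') (gA' : A' →+ B')
    (u : T →+ T') (v : A →+ A') (w : B →+ B')
    (hfT : Function.Injective fT) (hgA : Function.Surjective gA)
    (hex : fT.range = gA.ker)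
    (hfT' : Function.Injective fT') (hgA' : Function.Surjective gA')
    (hex' : fT'.range = gA'.ker)
    (hc1 : v.comp fT = fT'.comp u) (hc2 : w.comp gA = gA'.comp v)
    (htors : ∀ b' : B', N • b' = 0 → ∃ b : B, N • b = 0 ∧ w b = b')
    (hu : Function.Bijective (mapModN N u))
    (hw : Function.Bijective (mapModN N w)) :
    Function.Bijective (mapModN N v) :=
  stmt0_general N fT gA fT' gA' u v w hgA hex hfT' hgA' hex' hc1 hc2 htors hu hw
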